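/- Let β ∈ (0,1). The function f(θ) = θ^{−β} · log(1+θ) on (0,∞) attains a maximum at a unique point θ_opt > 0, and θ_opt is the unique positive solution of β(1+θ)log(1+θ) = θ. (In the paper's notation, with β = d/α for a d-dimensional network with path loss exponent α > d, this θ_opt equals exp(𝒲(−(α/d)e^{−α/d}) + α/d) − 1, where 𝒲 is the principal branch of the Lambert W function.) -/

import Mathlib

/-!
With `g θ = β (1+θ) log (1+θ) - θ`, the derivative of `θ^{-β} log (1+θ)` is
`-θ^{-β-1} (1+θ)⁻¹ g θ`. Since `θ ↦ (1+θ) log (1+θ)` is strictly convex, so is `g` on `[0, ∞)`;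
as `g 0 = 0`, `g (e^{1/β - 1} - 1) < 0` (this is where `β < 1` enters) and `g (e^{1/β} - 1) = 1`,
`g` has exactly one positive root `θ_opt`, is negative on `(0, θ_opt)` and positive beyond it.
So the throughput increases strictly up to `θ_opt` and decreases strictly after it.
-/

open Real Set

theorem StrictConvexOn.const_mul {E : Type*} [AddCommMonoid E] [Module ℝ E] {s : Set E}
    {f : E → ℝ} {c : ℝ} (hc : 0 < c) (hf : StrictConvexOn ℝ s f) : StrictConvexOn ℝ s fun x => c * f x :=
  ⟨hf.1, fun _ hx _ hy hxy _ _ ha hb hab => by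
    simpa only [smul_eq_mul, mul_add, mul_left_comm c]
      using mul_lt_mul_of_pos_left (hf.2 hx hy hxy ha hb hab) hc⟩

theorem StrictConvexOn.neg_of_mem_Ioo {s : Set ℝ} {g : ℝ → ℝ} (hg : StrictConvexOn ℝ s g)
    {a b x : ℝ} (ha : a ∈ s) (hb : b ∈ s) (hga : g a ≤ 0) (hgb : g b ≤ 0) (hx : x ∈ Ioo a b) :
    g x < 0 := by
  have hab : a < b := hx.1.trans hx.2
  calc g x < max (g a) (g b) :=
        hg.lt_on_openSegment ha hb hab.ne (by rwa [openSegment_eq_Ioo hab])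
    _ ≤ 0 := max_le hga hgb

theorem StrictConvexOn.lt_right_of_left_le {s : Set ℝ} {g : ℝ → ℝ} (hg : StrictConvexOn ℝ s g)
    {x y z : ℝ} (hx : x ∈ s) (hy : y ∈ s) (hz : z ∈ Ioo x y) (hxz : g x ≤ g z) : g z < g y := by
  have hxy : x < y := hz.1.trans hz.2
  have key : g z < max (g x) (g y) :=
    hg.lt_on_openSegment hx hy hxy.ne (by rwa [openSegment_eq_Ioo hxy])
  by_contra! hyz
  exact (max_le hxz hyz).not_gt key

theorem lt_of_hasDerivAt_pos_of_neg {f f' : ℝ → ℝ} {a c x : ℝ} (hac : a < c)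
    (hf : ∀ y, a < y → HasDerivAt f (f' y) y) (hpos : ∀ y, a < y → y < c → 0 < f' y)
    (hneg : ∀ y, c < y → f' y < 0) (hx : a < x) (hxc : x ≠ c) : f x < f c := by
  have hcont : ∀ {s : Set ℝ}, s ⊆ Ioi a → ContinuousOn f s := fun hs y hy =>
    (hf y (hs hy)).continuousAt.continuousWithinAt
  rcases hxc.lt_or_gt with h | h
  · refine strictMonoOn_of_hasDerivWithinAt_pos (f' := f') (convex_Icc x c)
      (hcont fun y hy => hx.trans_le hy.1) (fun y hy => ?_) (fun y hy => ?_)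
      (left_mem_Icc.2 h.le) (right_mem_Icc.2 h.le) h <;> rw [interior_Icc] at hy
    · exact (hf y (hx.trans hy.1)).hasDerivWithinAt
    · exact hpos y (hx.trans hy.1) hy.2
  · refine strictAntiOn_of_hasDerivWithinAt_neg (f' := f') (convex_Icc c x)
      (hcont fun y hy => hac.trans_le hy.1) (fun y hy => ?_) (fun y hy => ?_)
      (left_mem_Icc.2 h.le) (right_mem_Icc.2 h.le) h <;> rw [interior_Icc] at hy
    · exact (hf y (hac.trans hy.1)).hasDerivWithinAt
    · exact hneg y hy.1

noncomputable def optimalityGap (β θ : ℝ) : ℝ := β * ((1 + θ) * log (1 + θ)) - θ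

theorem optimalityGap_eq_zero_iff {β θ : ℝ} :
    optimalityGap β θ = 0 ↔ β * (1 + θ) * log (1 + θ) = θ := by
  rw [optimalityGap, sub_eq_zero, mul_assoc]

theorem continuous_optimalityGap (β : ℝ) : Continuous (optimalityGap β) :=
  ((continuous_mul_log.comp (continuous_const.add continuous_id)).const_smul β).sub continuous_id

theorem strictConvexOn_optimalityGap {β : ℝ} (hβ : 0 < β) :
    StrictConvexOn ℝ (Ici 0) (optimalityGap β) := by
  have hshift : StrictConvexOn ℝ (Ici 0) fun θ : ℝ => (1 + θ) * log (1 + θ) :=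
    (strictConvexOn_mul_log.translate_right 1).subset
      (fun θ (hθ : 0 ≤ θ) => show (0 : ℝ) ≤ 1 + θ by linarith) (convex_Ici 0)
  exact (hshift.const_mul hβ).sub_concaveOn (concaveOn_id (convex_Ici 0))

theorem optimalityGap_zero (β : ℝ) : optimalityGap β 0 = 0 := by
  simp [optimalityGap]

theorem optimalityGap_exp_inv_sub_one {β : ℝ} (hβ : β ≠ 0) :
    optimalityGap β (exp β⁻¹ - 1) = 1 := by
  rw [optimalityGap, add_sub_cancel, log_exp]
  field_simp
  ring

theorem optimalityGap_exp_inv_sub_one_sub_one_neg {β : ℝ} (hβ0 : 0 < β) (hβ1 : β ≠ 1) :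
    optimalityGap β (exp (β⁻¹ - 1) - 1) < 0 := by
  have hexp : β⁻¹ - 1 + 1 < exp (β⁻¹ - 1) :=
    add_one_lt_exp (sub_ne_zero.2 (inv_ne_one.2 hβ1))
  have hβexp : 1 < β * exp (β⁻¹ - 1) := by
    calc (1 : ℝ) = β * (β⁻¹ - 1 + 1) := by field_simp; ring
      _ < β * exp (β⁻¹ - 1) := mul_lt_mul_of_pos_left hexp hβ0
  rw [optimalityGap, add_sub_cancel, log_exp]
  have hexpand : β * (exp (β⁻¹ - 1) * (β⁻¹ - 1)) = exp (β⁻¹ - 1) - β * exp (β⁻¹ - 1) := by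
    field_simp
  linarith

theorem exists_pos_optimalityGap_eq_zero {β : ℝ} (hβ0 : 0 < β) (hβ1 : β < 1) :
    ∃ r, 0 < r ∧ optimalityGap β r = 0 := by
  have hlo : 0 < exp (β⁻¹ - 1) - 1 := by
    rw [sub_pos]; exact one_lt_exp_iff.2 (sub_pos.2 (one_lt_inv₀ hβ0 |>.2 hβ1))
  have hhi : exp (β⁻¹ - 1) - 1 ≤ exp β⁻¹ - 1 := by gcongr; linarith
  obtain ⟨r, hr, hroot⟩ := intermediate_value_Ioo hhi (continuous_optimalityGap β).continuousOn
    ⟨optimalityGap_exp_inv_sub_one_sub_one_neg hβ0 hβ1.ne,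
      (optimalityGap_exp_inv_sub_one hβ0.ne').symm ▸ one_pos⟩
  exact ⟨r, hlo.trans hr.1, hroot⟩

section SignOfGap

variable {β r θ : ℝ}

theorem optimalityGap_neg_of_lt (hβ : 0 < β) (hr : 0 < r) (hroot : optimalityGap β r = 0)
    (hθ : 0 < θ) (hθr : θ < r) : optimalityGap β θ < 0 :=
  (strictConvexOn_optimalityGap hβ).neg_of_mem_Ioo (mem_Ici.2 le_rfl) hr.le
    (optimalityGap_zero β).le hroot.le ⟨hθ, hθr⟩

theorem optimalityGap_pos_of_gt (hβ : 0 < β) (hr : 0 < r) (hroot : optimalityGap β r = 0)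
    (hrθ : r < θ) : 0 < optimalityGap β θ :=
  hroot ▸ (strictConvexOn_optimalityGap hβ).lt_right_of_left_le (mem_Ici.2 le_rfl)
    (mem_Ici.2 (hr.trans hrθ).le) ⟨hr, hrθ⟩ (by rw [optimalityGap_zero, hroot])

end SignOfGap

theorem hasDerivAt_rpow_neg_mul_log_one_add (β : ℝ) {θ : ℝ} (hθ : 0 < θ) :
    HasDerivAt (fun x => x ^ (-β) * log (1 + x))
      (-(θ ^ (-β - 1) * (1 + θ)⁻¹ * optimalityGap β θ)) θ := by
  have hlog : HasDerivAt (fun x => log (1 + x)) (1 + θ)⁻¹ θ := by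
    simpa using ((hasDerivAt_id' θ).const_add 1).log (by positivity)
  refine ((hasDerivAt_rpow_const (p := -β) (Or.inl hθ.ne')).mul hlog).congr_deriv ?_
  have hpow : θ ^ (-β) = θ ^ (-β - 1) * θ := by
    rw [← rpow_add_one hθ.ne']; norm_num
  simp only [optimalityGap, hpow]
  field_simp
  ring

/-- For `β ∈ (0,1)`, the function `f(θ) = θ^{-β} log (1+θ)` on `(0,∞)` attains its maximum
at a unique point `θ_opt > 0`, and `θ_opt` is the unique positive solution of
`β (1+θ) log (1+θ) = θ`. -/
theorem optimal_sir_threshold (β : ℝ) (hβ0 : 0 < β) (hβ1 : β < 1) :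
    ∃ θopt : ℝ, 0 < θopt ∧
      (∀ θ : ℝ, 0 < θ → θ ≠ θopt →
        θ ^ (-β) * Real.log (1 + θ) < θopt ^ (-β) * Real.log (1 + θopt)) ∧
      β * (1 + θopt) * Real.log (1 + θopt) = θopt ∧
      (∀ θ : ℝ, 0 < θ → β * (1 + θ) * Real.log (1 + θ) = θ → θ = θopt) := by
  obtain ⟨r, hr, hroot⟩ := exists_pos_optimalityGap_eq_zero hβ0 hβ1
  refine ⟨r, hr, fun θ hθ hθr => ?_, optimalityGap_eq_zero_iff.1 hroot, fun θ hθ hθroot => ?_⟩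
  · refine lt_of_hasDerivAt_pos_of_neg hr (fun y hy => hasDerivAt_rpow_neg_mul_log_one_add β hy)
      (fun y hy hyr => ?_) (fun y hry => ?_) hθ hθr
    · exact neg_pos.2 (mul_neg_of_pos_of_neg (by positivity)
        (optimalityGap_neg_of_lt hβ0 hr hroot hy hyr))
    · have hy : 0 < y := hr.trans hry
      exact neg_neg_of_pos (mul_pos (by positivity) (optimalityGap_pos_of_gt hβ0 hr hroot hry))
  · rw [← optimalityGap_eq_zero_iff] at hθroot
    by_contra hne
    rcases lt_or_gt_of_ne hne with h | h
    · exact (optimalityGap_neg_of_lt hβ0 hr hroot hθ h).ne hθroot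
    · exact (optimalityGap_pos_of_gt hβ0 hr hroot h).ne' hθroot
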